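/- arXiv:1506.01327 — 4 statements merged into one kernel-verified Lean document; each statement's English description precedes it below -/
import Mathlib

section
/- Let w1, w2 be relatively prime positive integers with w1 > w2, and let I be a positive integer. If there exists a positive integer n with w1 - w2 = n·(w1+w2)/gcd(I, w1+w2), then setting K = gcd(I, w1+w2), we have 1 ≤ n < K and (w1, w2) = ((K+n)/gcd(K+n,K-n), (K-n)/gcd(K+n,K-n)). -/
/-- If coprime positive `w1 > w2` satisfy `w1 - w2 = n * (w1+w2)/gcd(I, w1+w2)` for a
positive integer `n`, then with `K = gcd(I, w1+w2)` we have `1 ≤ n < K` and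
`(w1, w2) = ((K+n)/gcd(K+n,K-n), (K-n)/gcd(K+n,K-n))`. -/
theorem stmt0 (w1 w2 I n : ℕ) (hw1 : 0 < w1) (hw2 : 0 < w2)
    (hcop : Nat.gcd w1 w2 = 1) (hgt : w2 < w1) (hI : 0 < I) (hn : 0 < n)
    (heq : w1 - w2 = n * ((w1 + w2) / Nat.gcd I (w1 + w2))) :
    1 ≤ n ∧ n < Nat.gcd I (w1 + w2) ∧
      w1 = (Nat.gcd I (w1 + w2) + n) /
        Nat.gcd (Nat.gcd I (w1 + w2) + n) (Nat.gcd I (w1 + w2) - n) ∧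
      w2 = (Nat.gcd I (w1 + w2) - n) /
        Nat.gcd (Nat.gcd I (w1 + w2) + n) (Nat.gcd I (w1 + w2) - n) := by
  set K := Nat.gcd I (w1 + w2) with hK
  have hKd : K ∣ w1 + w2 := Nat.gcd_dvd_right _ _
  have hKpos : 0 < K := Nat.gcd_pos_of_pos_right _ (by omega)
  obtain ⟨m, hm⟩ := hKd
  have hmpos : 0 < m := by
    rcases Nat.eq_zero_or_pos m with h | h
    · subst h; simp at hm; omega
    · exact h
  have hdiv : (w1 + w2) / K = m := by rw [hm]; exact Nat.mul_div_cancel_left m hKpos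
  rw [hdiv] at heq
  have hnK : n < K := by
    by_contra h
    push_neg at h
    have : K * m ≤ n * m := Nat.mul_le_mul_right m h
    omega
  have hkey : w1 * (K - n) = w2 * (K + n) := by
    zify [le_of_lt hgt, le_of_lt hnK] at heq ⊢
    nlinarith [heq, hm]
  have hw1d : w1 ∣ K + n := by
    have hd : w1 ∣ (K + n) * w2 := ⟨K - n, by rw [mul_comm w2 (K + n)] at hkey; omega⟩
    exact (Nat.Coprime.dvd_of_dvd_mul_right hcop hd)
  obtain ⟨t, ht⟩ := hw1d
  have htpos : 0 < t := by
    rcases Nat.eq_zero_or_pos t with h | h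
    · subst h; simp at ht; omega
    · exact h
  have ht2 : K - n = w2 * t := by
    have : w1 * (K - n) = w1 * (w2 * t) := by
      rw [hkey, ht]; ring
    exact Nat.eq_of_mul_eq_mul_left hw1 this
  have hg : Nat.gcd (K + n) (K - n) = t := by
    rw [ht, ht2, mul_comm w1 t, mul_comm w2 t, Nat.gcd_mul_left, hcop, mul_one]
  refine ⟨hn, hnK, ?_, ?_⟩
  · rw [hg, ht, Nat.mul_div_cancel _ htpos]
  · rw [hg, ht2, Nat.mul_div_cancel _ htpos]
end

section
/- Let I and K be positive integers with K dividing I, and let n range over integers with 1 ≤ n < K. Then the pairs (w1, w2) = ((K+n)/gcd(K+n,K-n), (K-n)/gcd(K+n,K-n)) for distinct n with gcd(I, w1+w2) = K are distinct, and each such pair consists of relatively prime positive integers with w1 > w2. -/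
/-- For `K ∣ I`, `K, I > 0`, the pairs `((K+n)/gcd(K+n,K-n), (K-n)/gcd(K+n,K-n))`
for `1 ≤ n < K` with `gcd(I, w1+w2) = K` are distinct for distinct `n`, and each such
pair consists of relatively prime positive integers with `w1 > w2`. -/
theorem stmt1 (I K : ℕ) (hI : 0 < I) (hK : 0 < K) (hdvd : K ∣ I) :
    (∀ n m : ℕ, 1 ≤ n → n < K → 1 ≤ m → m < K →
      Nat.gcd I ((K + n) / Nat.gcd (K + n) (K - n) + (K - n) / Nat.gcd (K + n) (K - n)) = K →
      Nat.gcd I ((K + m) / Nat.gcd (K + m) (K - m) + (K - m) / Nat.gcd (K + m) (K - m)) = K →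
      ((K + n) / Nat.gcd (K + n) (K - n), (K - n) / Nat.gcd (K + n) (K - n)) =
        ((K + m) / Nat.gcd (K + m) (K - m), (K - m) / Nat.gcd (K + m) (K - m)) →
      n = m) ∧
    (∀ n : ℕ, 1 ≤ n → n < K →
      Nat.gcd ((K + n) / Nat.gcd (K + n) (K - n)) ((K - n) / Nat.gcd (K + n) (K - n)) = 1 ∧
      0 < (K - n) / Nat.gcd (K + n) (K - n) ∧
      (K - n) / Nat.gcd (K + n) (K - n) < (K + n) / Nat.gcd (K + n) (K - n)) := by
  have key : ∀ n : ℕ, 1 ≤ n → n < K →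
      ((K + n) / Nat.gcd (K + n) (K - n)) * Nat.gcd (K + n) (K - n) = K + n ∧
      ((K - n) / Nat.gcd (K + n) (K - n)) * Nat.gcd (K + n) (K - n) = K - n ∧
      0 < Nat.gcd (K + n) (K - n) := by
    intro n h1 h2
    have hpos : 0 < Nat.gcd (K + n) (K - n) := Nat.gcd_pos_of_pos_left _ (by omega)
    exact ⟨Nat.div_mul_cancel (Nat.gcd_dvd_left _ _),
      Nat.div_mul_cancel (Nat.gcd_dvd_right _ _), hpos⟩
  constructor
  · intro n m hn1 hn2 hm1 hm2 _ _ heq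
    obtain ⟨han, hbn, hgn⟩ := key n hn1 hn2
    obtain ⟨ham, hbm, hgm⟩ := key m hm1 hm2
    have h1 : (K + n) / Nat.gcd (K + n) (K - n) = (K + m) / Nat.gcd (K + m) (K - m) :=
      congrArg Prod.fst heq
    have h2 : (K - n) / Nat.gcd (K + n) (K - n) = (K - m) / Nat.gcd (K + m) (K - m) :=
      congrArg Prod.snd heq
    set a := (K + n) / Nat.gcd (K + n) (K - n) with ha
    set b := (K - n) / Nat.gcd (K + n) (K - n) with hb
    rw [← h1] at ham
    rw [← h2] at hbm
    have hsum1 : (a + b) * Nat.gcd (K + n) (K - n) = 2 * K := by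
      rw [add_mul]; omega
    have hsum2 : (a + b) * Nat.gcd (K + m) (K - m) = 2 * K := by
      rw [add_mul]; omega
    have hab : 0 < a + b := by
      rcases Nat.eq_zero_or_pos (a + b) with h | h
      · simp [h] at hsum1; omega
      · exact h
    have hg : Nat.gcd (K + n) (K - n) = Nat.gcd (K + m) (K - m) :=
      Nat.eq_of_mul_eq_mul_left hab (hsum1.trans hsum2.symm)
    rw [← hg] at ham
    omega
  · intro n h1 h2
    obtain ⟨han, hbn, hgn⟩ := key n h1 h2
    refine ⟨Nat.coprime_div_gcd_div_gcd hgn, ?_, ?_⟩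
    · refine Nat.div_pos (Nat.le_of_dvd (by omega) (Nat.gcd_dvd_right _ _)) hgn
    · have : (K - n) / Nat.gcd (K + n) (K - n) * Nat.gcd (K + n) (K - n) <
          (K + n) / Nat.gcd (K + n) (K - n) * Nat.gcd (K + n) (K - n) := by omega
      exact Nat.lt_of_mul_lt_mul_right this
end

section
/- Let w1, w2 be relatively prime positive integers with w1 > w2 and I = 3. Then there exists a positive integer n with w1 - w2 = n·(w1+w2)/gcd(3, w1+w2) if and only if (w1, w2) = (2, 1) or (w1, w2) = (5, 1). -/
/-- For coprime positive integers `w1 > w2` and `I = 3`, there exists a positive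
integer `n` with `w1 - w2 = n * (w1+w2)/gcd(3, w1+w2)` iff `(w1, w2) = (2,1)` or `(5,1)`. -/
theorem stmt4 (w1 w2 : ℕ) (hw1 : 0 < w1) (hw2 : 0 < w2)
    (hcop : Nat.gcd w1 w2 = 1) (hgt : w2 < w1) :
    (∃ n : ℕ, 0 < n ∧ w1 - w2 = n * ((w1 + w2) / Nat.gcd 3 (w1 + w2))) ↔
      ((w1, w2) = (2, 1) ∨ (w1, w2) = (5, 1)) := by
  constructor
  · rintro ⟨n, hn, heq⟩
    by_cases h3 : 3 ∣ w1 + w2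
    · have hg : Nat.gcd 3 (w1 + w2) = 3 := Nat.gcd_eq_left h3
      rw [hg] at heq
      have hs : 3 * ((w1 + w2) / 3) = w1 + w2 := Nat.mul_div_cancel' h3
      have key : 3 * (w1 - w2) = n * (w1 + w2) := by
        calc 3 * (w1 - w2) = 3 * (n * ((w1 + w2) / 3)) := by rw [heq]
          _ = n * (3 * ((w1 + w2) / 3)) := by ring
          _ = n * (w1 + w2) := by rw [hs]
      have hlt : n * (w1 + w2) < 3 * (w1 + w2) := by omega
      have hn3 : n < 3 := Nat.lt_of_mul_lt_mul_right hlt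
      interval_cases n
      · -- n = 1 : 3*(w1-w2) = w1+w2 ⇒ w1 = 2*w2
        have hw : w1 = 2 * w2 := by omega
        have hdvd : w2 ∣ Nat.gcd w1 w2 := Nat.dvd_gcd ⟨2, by omega⟩ dvd_rfl
        rw [hcop] at hdvd
        have : w2 = 1 := Nat.eq_one_of_dvd_one hdvd
        left
        simp [Prod.ext_iff]; omega
      · -- n = 2 : 3*(w1-w2) = 2*(w1+w2) ⇒ w1 = 5*w2
        have hw : w1 = 5 * w2 := by omega
        have hdvd : w2 ∣ Nat.gcd w1 w2 := Nat.dvd_gcd ⟨5, by omega⟩ dvd_rfl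
        rw [hcop] at hdvd
        have : w2 = 1 := Nat.eq_one_of_dvd_one hdvd
        right
        simp [Prod.ext_iff]; omega
    · have hg : Nat.gcd 3 (w1 + w2) = 1 :=
        (Nat.Prime.coprime_iff_not_dvd Nat.prime_three).mpr h3
      rw [hg, Nat.div_one] at heq
      have : w1 + w2 ≤ n * (w1 + w2) := Nat.le_mul_of_pos_left _ hn
      omega
  · rintro (h | h) <;> rw [Prod.ext_iff] at h <;> obtain ⟨h1, h2⟩ := h <;>
      simp only at h1 h2 <;> subst h1 <;> subst h2
    · exact ⟨1, one_pos, by norm_num⟩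
    · exact ⟨2, two_pos, by norm_num⟩
end

section
/- Let r ≥ 1 and for a pair w = (w1, w2) of relatively prime positive integers define l1(w) = (r+1)/gcd(w1+w2, r+1). If w = (w1,w2) and w' = (w1',w2') are two such pairs with w1'·w2'·l1(w')² = w1·w2·l1(w)², then w1'·w2' = w1·w2 and l1(w') = l1(w). -/
/-- For `r ≥ 1` and coprime positive pairs `w`, `w'` with
`w1'·w2'·l1(w')² = w1·w2·l1(w)²` where `l1(w) = (r+1)/gcd(w1+w2, r+1)`, we get
`w1'·w2' = w1·w2` and `l1(w') = l1(w)`. -/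
theorem stmt7 (r w1 w2 w1' w2' : ℕ) (hr : 1 ≤ r)
    (hw1 : 0 < w1) (hw2 : 0 < w2) (hw1' : 0 < w1') (hw2' : 0 < w2')
    (hcop : Nat.gcd w1 w2 = 1) (hcop' : Nat.gcd w1' w2' = 1)
    (h : w1' * w2' * ((r + 1) / Nat.gcd (w1' + w2') (r + 1)) ^ 2 =
      w1 * w2 * ((r + 1) / Nat.gcd (w1 + w2) (r + 1)) ^ 2) :
    w1' * w2' = w1 * w2 ∧
      (r + 1) / Nat.gcd (w1' + w2') (r + 1) = (r + 1) / Nat.gcd (w1 + w2) (r + 1) := by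
  set g := Nat.gcd (w1 + w2) (r + 1) with hg
  set g' := Nat.gcd (w1' + w2') (r + 1) with hg'
  have hgd : g ∣ r + 1 := Nat.gcd_dvd_right _ _
  have hgd' : g' ∣ r + 1 := Nat.gcd_dvd_right _ _
  have hmul : (r + 1) / g * g = r + 1 := Nat.div_mul_cancel hgd
  have hmul' : (r + 1) / g' * g' = r + 1 := Nat.div_mul_cancel hgd'
  -- coprimality of products with the gcds
  have hc : Nat.Coprime (w1 * w2) g := by
    have h1 : Nat.Coprime (w1 * w2) (w1 + w2) :=
      Nat.Coprime.mul
        (by simpa [Nat.Coprime, Nat.gcd_add_self_right] using (hcop : Nat.Coprime w1 w2))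
        (by simpa [Nat.Coprime, Nat.gcd_add_self_right, Nat.gcd_comm] using
              (hcop : Nat.Coprime w1 w2))
    exact h1.coprime_dvd_right (Nat.gcd_dvd_left _ _)
  have hc' : Nat.Coprime (w1' * w2') g' := by
    have h1 : Nat.Coprime (w1' * w2') (w1' + w2') :=
      Nat.Coprime.mul
        (by simpa [Nat.Coprime, Nat.gcd_add_self_right] using (hcop' : Nat.Coprime w1' w2'))
        (by simpa [Nat.Coprime, Nat.gcd_add_self_right, Nat.gcd_comm] using
              (hcop' : Nat.Coprime w1' w2'))
    exact h1.coprime_dvd_right (Nat.gcd_dvd_left _ _)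
  -- main cleared equation
  have key : w1' * w2' * g ^ 2 = w1 * w2 * g' ^ 2 := by
    have e : w1' * w2' * ((r + 1) / g') ^ 2 * (g ^ 2 * g' ^ 2) =
        w1 * w2 * ((r + 1) / g) ^ 2 * (g ^ 2 * g' ^ 2) := by rw [h]
    have e2 : w1' * w2' * g ^ 2 * (r + 1) ^ 2 = w1 * w2 * g' ^ 2 * (r + 1) ^ 2 := by
      calc w1' * w2' * g ^ 2 * (r + 1) ^ 2
          = w1' * w2' * g ^ 2 * ((r + 1) / g' * g') ^ 2 := by rw [hmul']
        _ = w1' * w2' * ((r + 1) / g') ^ 2 * (g ^ 2 * g' ^ 2) := by ring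
        _ = w1 * w2 * ((r + 1) / g) ^ 2 * (g ^ 2 * g' ^ 2) := e
        _ = w1 * w2 * g' ^ 2 * ((r + 1) / g * g) ^ 2 := by ring
        _ = w1 * w2 * g' ^ 2 * (r + 1) ^ 2 := by rw [hmul]
    exact Nat.eq_of_mul_eq_mul_right (by positivity) e2
  have hgg' : g = g' := by
    have d1 : g' ^ 2 ∣ g ^ 2 := by
      have : g' ^ 2 ∣ w1' * w2' * g ^ 2 := key ▸ dvd_mul_left (g' ^ 2) (w1 * w2)
      exact (Nat.Coprime.dvd_of_dvd_mul_left (hc'.symm.pow_left 2) this)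
    have d2 : g ^ 2 ∣ g' ^ 2 := by
      have : g ^ 2 ∣ w1 * w2 * g' ^ 2 := key ▸ dvd_mul_left (g ^ 2) (w1' * w2')
      exact (Nat.Coprime.dvd_of_dvd_mul_left (hc.symm.pow_left 2) this)
    have : g ^ 2 = g' ^ 2 := Nat.dvd_antisymm d2 d1
    exact Nat.pow_left_injective (by norm_num) this
  have hgpos : 0 < g := Nat.gcd_pos_of_pos_right _ (Nat.succ_pos r)
  refine ⟨?_, by rw [hgg']⟩
  have := key
  rw [hgg'] at this
  have hgpos' : 0 < g' := Nat.gcd_pos_of_pos_right _ (Nat.succ_pos r)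
  exact Nat.eq_of_mul_eq_mul_right (pow_pos hgpos' 2) this
end
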